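/- arXiv:2604.01144 — 3 statements merged into one kernel-verified Lean document; each statement's English description precedes it below -/
import Mathlib

section
/- Density-steering cost decomposition for the randomized mixed policy: consider the controlled Markov chain x_{k+1} = A_k x_k + B_k u_k + D_k w_k where at each step k the control u_k is set to u_k^{ij}(x_k) with probability γ_{ij}(x_k) = λ_{ij} p^{ij}_k(x_k)/p_k(x_k), with p_k = ∑_{ij} λ_{ij} p^{ij}_k being the resulting state marginal. Then the total expected control cost satisfies E[∑_{k=0}^{N-1} ‖u_k‖²] = ∑_{ij} λ_{ij} J^{DS}_{ij}, where J^{DS}_{ij} = ∑_k ∫ p^{ij}_k(x) ‖u_k^{ij}(x)‖² dx is the cost of the (i,j)-component policy along its own state marginals. -/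
open MeasureTheory

noncomputable section

/-- under the randomized mixed policy (apply `u^{ij}_k(x)` with
probability `λᵢⱼ pᵢⱼ_k(x)/p_k(x)`), the total expected control cost equals
`∑ᵢⱼ λᵢⱼ J^{DS}_{ij}`. -/
theorem randomized_policy_cost_decomposition
    (n m N N1 N2 : ℕ)
    (A : ℕ → Matrix (Fin n) (Fin n) ℝ)
    (B : ℕ → Matrix (Fin n) (Fin m) ℝ)
    (D : ℕ → Matrix (Fin n) (Fin n) ℝ)
    -- deterministic feedback policies and the corresponding state marginals
    (u : Fin N1 → Fin N2 → ℕ → (Fin n → ℝ) → (Fin m → ℝ))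
    (pij : Fin N1 → Fin N2 → ℕ → (Fin n → ℝ) → ℝ)
    (lam : Fin N1 → Fin N2 → ℝ)
    (hlam : ∀ i j, 0 ≤ lam i j) (hsum : ∑ i, ∑ j, lam i j = 1)
    (p : ℕ → (Fin n → ℝ) → ℝ)
    (hp : ∀ k x, p k x = ∑ i, ∑ j, lam i j * pij i j k x)
    (hpos : ∀ k x, 0 < p k x)
    (hint : ∀ i j k, Integrable (fun x : Fin n → ℝ =>
      pij i j k x * ∑ a, (u i j k x a)^2))
    (J : Fin N1 → Fin N2 → ℝ)
    (hJ : ∀ i j, J i j = ∑ k ∈ Finset.range N,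
      ∫ x : Fin n → ℝ, pij i j k x * ∑ a, (u i j k x a)^2) :
    (∑ k ∈ Finset.range N, ∫ x : Fin n → ℝ,
        p k x * ∑ i, ∑ j, (lam i j * pij i j k x / p k x) * ∑ a, (u i j k x a)^2)
      = ∑ i, ∑ j, lam i j * J i j := by

  have hstep : ∀ k ∈ Finset.range N,
      (∫ x : Fin n → ℝ,
        p k x * ∑ i, ∑ j, (lam i j * pij i j k x / p k x) * ∑ a, (u i j k x a)^2)
      = ∑ i, ∑ j, lam i j * ∫ x : Fin n → ℝ, pij i j k x * ∑ a, (u i j k x a)^2 := by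
    intro k _
    have hptw : ∀ x : Fin n → ℝ,
        p k x * ∑ i, ∑ j, (lam i j * pij i j k x / p k x) * ∑ a, (u i j k x a)^2
        = ∑ i, ∑ j, lam i j * (pij i j k x * ∑ a, (u i j k x a)^2) := by
      intro x
      rw [Finset.mul_sum]
      refine Finset.sum_congr rfl fun i _ => ?_
      rw [Finset.mul_sum]
      refine Finset.sum_congr rfl fun j _ => ?_
      field_simp [(hpos k x).ne']
    simp only [hptw]
    rw [integral_finset_sum _ fun i _ => (integrable_finset_sum _ fun j _ => ((hint i j k).const_mul (lam i j)))]
    refine Finset.sum_congr rfl fun i _ => ?_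
    rw [integral_finset_sum _ fun j _ => ((hint i j k).const_mul (lam i j))]
    exact Finset.sum_congr rfl fun j _ => integral_const_mul _ _
  rw [Finset.sum_congr rfl hstep, Finset.sum_comm]
  refine Finset.sum_congr rfl fun i _ => ?_
  rw [Finset.sum_comm]
  refine Finset.sum_congr rfl fun j _ => ?_
  rw [hJ, Finset.mul_sum]
end
end

section
/- Covariance recursion consistency in the Gaussian discrete-time Schrödinger bridge: let P_k = P_0 + kεI and Q_k = Q_0 − kεI with P_0, Q_0 symmetric positive definite and Q_k positive definite for k = 0,…,N, and set Σ_k = (P_k^{-1} + Q_k^{-1})^{-1}. If x_k ∼ N(μ_k, Σ_k) and x_{k+1} | x_k ∼ N(μ_{k+1} + (I − εQ_k^{-1})(x_k − μ_k), ε(I − εQ_k^{-1})), then x_{k+1} ∼ N(μ_{k+1}, Σ_{k+1}), i.e., (I − εQ_k^{-1})Σ_k(I − εQ_k^{-1}) + ε(I − εQ_k^{-1}) = Σ_{k+1}. -/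
open Matrix

noncomputable section

private lemma posSemidef_smul_one {n : ℕ} {c : ℝ} (hc : 0 ≤ c) :
    (c • (1 : Matrix (Fin n) (Fin n) ℝ)).PosSemidef := by
  rw [Matrix.smul_one_eq_diagonal]
  exact Matrix.posSemidef_diagonal_iff.2 fun _ => hc

private lemma sigma_formula {n : ℕ} (A B : Matrix (Fin n) (Fin n) ℝ)
    (hA : IsUnit A) (hB : IsUnit B) (hM : IsUnit (A + B)) :
    (B⁻¹ + A⁻¹)⁻¹ = A * (A + B)⁻¹ * B := by
  have hAd := (Matrix.isUnit_iff_isUnit_det A).1 hA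
  have hBd := (Matrix.isUnit_iff_isUnit_det B).1 hB
  have hMd := (Matrix.isUnit_iff_isUnit_det (A + B)).1 hM
  apply Matrix.inv_eq_right_inv
  have key : (B⁻¹ + A⁻¹) * A = B⁻¹ * (A + B) := by
    rw [add_mul, Matrix.nonsing_inv_mul A hAd, mul_add, Matrix.nonsing_inv_mul B hBd]
  calc (B⁻¹ + A⁻¹) * (A * (A + B)⁻¹ * B)
      = ((B⁻¹ + A⁻¹) * A) * ((A + B)⁻¹ * B) := by noncomm_ring
    _ = B⁻¹ * ((A + B) * (A + B)⁻¹) * B := by rw [key]; noncomm_ring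
    _ = 1 := by rw [Matrix.mul_nonsing_inv _ hMd, mul_one, Matrix.nonsing_inv_mul B hBd]

/-- covariance recursion consistency in the Gaussian discrete-time
Schrödinger bridge: with `P_k = P₀ + kεI`, `Q_k = Q₀ - kεI`,
`Σ_k = (P_k⁻¹ + Q_k⁻¹)⁻¹` and `F_k = I - εQ_k⁻¹`, pushing `N(μ_k, Σ_k)` through the
affine-Gaussian kernel with matrix `F_k` and noise covariance `εF_k` gives
`N(μ_{k+1}, Σ_{k+1})`, i.e. `F_k Σ_k F_kᵀ + εF_k = Σ_{k+1}`. -/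
theorem gaussian_dtSB_covariance_recursion
    (n N : ℕ) (ε : ℝ) (hε : 0 < ε)
    (P0 Q0 : Matrix (Fin n) (Fin n) ℝ)
    (hP0 : P0.PosDef) (hQ0 : Q0.PosDef)
    (P Q S : ℕ → Matrix (Fin n) (Fin n) ℝ)
    (hP : ∀ k, P k = P0 + ((k : ℝ) * ε) • (1 : Matrix (Fin n) (Fin n) ℝ))
    (hQ : ∀ k, Q k = Q0 - ((k : ℝ) * ε) • (1 : Matrix (Fin n) (Fin n) ℝ))
    (hQpos : ∀ k, k ≤ N → (Q k).PosDef)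
    (hS : ∀ k, S k = ((P k)⁻¹ + (Q k)⁻¹)⁻¹) :
    ∀ k, k < N →
      ((1 : Matrix (Fin n) (Fin n) ℝ) - ε • (Q k)⁻¹) * S k *
          ((1 : Matrix (Fin n) (Fin n) ℝ) - ε • (Q k)⁻¹)ᵀ
        + ε • ((1 : Matrix (Fin n) (Fin n) ℝ) - ε • (Q k)⁻¹) = S (k+1) := by
  intro k hk
  -- positivity facts
  have hPk : (P k).PosDef := by
    rw [hP k]
    exact hP0.add_posSemidef (posSemidef_smul_one (by positivity))
  have hPk1 : (P (k+1)).PosDef := by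
    rw [hP (k+1)]
    exact hP0.add_posSemidef (posSemidef_smul_one (by positivity))
  have hQk : (Q k).PosDef := hQpos k hk.le
  have hQk1 : (Q (k+1)).PosDef := hQpos (k+1) hk
  set A := Q k with hA
  set B := P k with hB
  set A' := Q (k+1) with hA'
  set B' := P (k+1) with hB'
  set M := A + B with hM
  have hMpos : M.PosDef := hQk.add hPk
  -- step relations
  have hstepA : A' = A - ε • 1 := by
    rw [hA', hA, hQ, hQ]; push_cast; rw [add_mul, one_mul]
    rw [add_smul, sub_sub]
  have hstepB : B' = B + ε • 1 := by
    rw [hB', hB, hP, hP]; push_cast; rw [add_mul, one_mul]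
    rw [add_smul, add_assoc]
  have hM' : A' + B' = M := by rw [hstepA, hstepB, hM]; abel
  -- invertibility / det units
  have hAd := (Matrix.isUnit_iff_isUnit_det A).1 hQk.isUnit
  have hMd := (Matrix.isUnit_iff_isUnit_det M).1 hMpos.isUnit
  have hSk : S k = A * M⁻¹ * B := by
    rw [hS k, ← hB, ← hA]
    exact sigma_formula A B hQk.isUnit hPk.isUnit hMpos.isUnit
  have hSk1 : S (k+1) = A' * M⁻¹ * B' := by
    rw [hS (k+1), ← hB', ← hA',
      sigma_formula A' B' hQk1.isUnit hPk1.isUnit (hM' ▸ hMpos).isUnit, hM']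
  -- F = 1 - ε•A⁻¹ = A' * A⁻¹ = A⁻¹ * A'
  have hAinv_symm : (A⁻¹)ᵀ = A⁻¹ := by
    rw [Matrix.transpose_nonsing_inv]
    congr 1
    simpa using hQk.isHermitian.eq
  have hF1 : A' * A⁻¹ = 1 - ε • A⁻¹ := by
    rw [hstepA, sub_mul, Matrix.mul_nonsing_inv A hAd, smul_mul_assoc, one_mul]
  have hF2 : A⁻¹ * A' = 1 - ε • A⁻¹ := by
    rw [hstepA, mul_sub, Matrix.nonsing_inv_mul A hAd, mul_smul_comm, mul_one]
  have hFt : (1 - ε • A⁻¹)ᵀ = 1 - ε • A⁻¹ := by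
    rw [Matrix.transpose_sub, Matrix.transpose_one, Matrix.transpose_smul, hAinv_symm]
  rw [hSk, hSk1, hFt, ← hF1]
  -- now pure algebra with A⁻¹, M⁻¹ as atoms
  have e1 : A' * A⁻¹ * (A * M⁻¹ * B) = A' * M⁻¹ * B := by
    calc A' * A⁻¹ * (A * M⁻¹ * B) = A' * (A⁻¹ * A) * M⁻¹ * B := by noncomm_ring
      _ = A' * M⁻¹ * B := by rw [Matrix.nonsing_inv_mul A hAd, mul_one]
  have e2 : ε • (A' * A⁻¹) = A' * M⁻¹ * (ε • (M * A⁻¹)) := by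
    calc ε • (A' * A⁻¹) = ε • (A' * (M⁻¹ * M) * A⁻¹) := by
          rw [Matrix.nonsing_inv_mul M hMd, mul_one]
      _ = A' * M⁻¹ * (ε • (M * A⁻¹)) := by noncomm_ring
  have e3 : B * A' + ε • M = B' * A := by
    rw [hstepA, hstepB, hM, smul_add]; noncomm_ring
  calc A' * A⁻¹ * (A * M⁻¹ * B) * (A' * A⁻¹) + ε • (A' * A⁻¹)
      = A' * M⁻¹ * B * (A' * A⁻¹) + A' * M⁻¹ * (ε • (M * A⁻¹)) := by rw [e1, e2]
    _ = A' * M⁻¹ * ((B * A' + ε • M) * A⁻¹) := by noncomm_ring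
    _ = A' * M⁻¹ * (B' * (A * A⁻¹)) := by rw [e3]; noncomm_ring
    _ = A' * M⁻¹ * B' := by rw [Matrix.mul_nonsing_inv A hAd, mul_one]
end
end

section
/- Matrix identity behind the covariance update: for symmetric invertible n×n matrices P, Q with P + Q invertible and Q − εI invertible, setting Σ = (P^{-1} + Q^{-1})^{-1}, P' = P + εI, Q' = Q − εI, and F = I − εQ^{-1} = Q'Q^{-1}, one has F Σ F⊤ + εF = ((P')^{-1} + (Q')^{-1})^{-1}. -/
open Matrix

noncomputable section

private lemma aux_inv_add_inv (n : ℕ) (A B : Matrix (Fin n) (Fin n) ℝ)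
    (hA : IsUnit A.det) (hB : IsUnit B.det) (hAB : IsUnit (A + B).det) :
    (A⁻¹ + B⁻¹)⁻¹ = B * (A + B)⁻¹ * A := by
  have h : A⁻¹ + B⁻¹ = A⁻¹ * (A + B) * B⁻¹ := by
    rw [Matrix.mul_add, Matrix.nonsing_inv_mul _ hA, Matrix.add_mul, one_mul,
      mul_assoc, Matrix.mul_nonsing_inv _ hB, mul_one, add_comm]
  rw [h, Matrix.mul_inv_rev, Matrix.mul_inv_rev, Matrix.nonsing_inv_nonsing_inv _ hA,
    Matrix.nonsing_inv_nonsing_inv _ hB, mul_assoc]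

/-- matrix identity behind the covariance update:
for symmetric invertible `P`, `Q` with `P + Q`, `P' = P + εI`, `Q' = Q - εI`,
`P' + Q'` invertible, and `Σ = (P⁻¹ + Q⁻¹)⁻¹`, `F = I - εQ⁻¹`, one has
`F Σ Fᵀ + εF = ((P')⁻¹ + (Q')⁻¹)⁻¹`. -/
theorem covariance_update_matrix_identity
    (n : ℕ) (ε : ℝ) (hε : 0 < ε)
    (P Q : Matrix (Fin n) (Fin n) ℝ)
    (hPsymm : Pᵀ = P) (hQsymm : Qᵀ = Q)
    (hP : IsUnit P.det) (hQ : IsUnit Q.det)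
    (hPQ : IsUnit (P + Q).det)
    (hP' : IsUnit (P + ε • (1 : Matrix (Fin n) (Fin n) ℝ)).det)
    (hQ' : IsUnit (Q - ε • (1 : Matrix (Fin n) (Fin n) ℝ)).det)
    (hP'Q' : IsUnit ((P + ε • (1 : Matrix (Fin n) (Fin n) ℝ))
      + (Q - ε • (1 : Matrix (Fin n) (Fin n) ℝ))).det) :
    ((1 : Matrix (Fin n) (Fin n) ℝ) - ε • Q⁻¹) * (P⁻¹ + Q⁻¹)⁻¹ *
        ((1 : Matrix (Fin n) (Fin n) ℝ) - ε • Q⁻¹)ᵀ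
      + ε • ((1 : Matrix (Fin n) (Fin n) ℝ) - ε • Q⁻¹)
    = ((P + ε • (1 : Matrix (Fin n) (Fin n) ℝ))⁻¹
        + (Q - ε • (1 : Matrix (Fin n) (Fin n) ℝ))⁻¹)⁻¹ := by
  have hK : Q⁻¹ * Q = 1 := Matrix.nonsing_inv_mul _ hQ
  have hK' : Q * Q⁻¹ = 1 := Matrix.mul_nonsing_inv _ hQ
  have hR : (P + Q)⁻¹ * (P + Q) = 1 := Matrix.nonsing_inv_mul _ hPQ
  have hsum : (P + ε • (1 : Matrix (Fin n) (Fin n) ℝ))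
      + (Q - ε • (1 : Matrix (Fin n) (Fin n) ℝ)) = P + Q := by abel
  have hSig : (P⁻¹ + Q⁻¹)⁻¹ = Q * (P + Q)⁻¹ * P := aux_inv_add_inv n P Q hP hQ hPQ
  have hRHS : ((P + ε • (1 : Matrix (Fin n) (Fin n) ℝ))⁻¹
        + (Q - ε • (1 : Matrix (Fin n) (Fin n) ℝ))⁻¹)⁻¹
      = (Q - ε • 1) * (P + Q)⁻¹ * (P + ε • 1) := by
    rw [aux_inv_add_inv n _ _ hP' hQ' (by rwa [hsum]), hsum]
  have hT : ((1 : Matrix (Fin n) (Fin n) ℝ) - ε • Q⁻¹)ᵀ = 1 - ε • Q⁻¹ := by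
    rw [transpose_sub, transpose_smul, transpose_one, Matrix.transpose_nonsing_inv, hQsymm]
  rw [hSig, hT, hRHS]
  -- key cancellation facts
  have hRP : (P + Q)⁻¹ * P = 1 - (P + Q)⁻¹ * Q := by
    rw [eq_sub_iff_add_eq, ← Matrix.mul_add, hR]
  have hRPK : (P + Q)⁻¹ * (P * Q⁻¹) = Q⁻¹ - (P + Q)⁻¹ := by
    rw [← mul_assoc, hRP, Matrix.sub_mul, one_mul, mul_assoc, hK', mul_one]
  have hKx : ∀ X : Matrix (Fin n) (Fin n) ℝ, Q⁻¹ * (Q * X) = X := fun X => by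
    rw [← mul_assoc, hK, one_mul]
  have hK'x : ∀ X : Matrix (Fin n) (Fin n) ℝ, Q * (Q⁻¹ * X) = X := fun X => by
    rw [← mul_assoc, hK', one_mul]
  simp only [Matrix.sub_mul, Matrix.mul_sub, Matrix.add_mul, Matrix.mul_add,
    Matrix.smul_mul, Matrix.mul_smul, one_mul, mul_one, smul_smul, smul_sub, smul_add,
    mul_assoc, hRPK, hK, hK', hKx, hK'x]
  module
end
end
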